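/- For H ∈ (0,1), θ > 0, σ ∈ ℝ and t ≥ 0, the variance of the fractional Ornstein–Uhlenbeck process started at a deterministic point, given by Var_H(t) = (σ²/2) ( ∫₀ᵗ 2H e^{−z/θ} z^{2H−1} dz + e^{−2t/θ} ∫₀ᵗ 2H e^{z/θ} z^{2H−1} dz ), satisfies lim_{t → +∞} Var_H(t) = σ² θ^{2H} H Γ(2H). -/

import Mathlib

/-! The first integral increases to the scaled Gamma integral
`∫₀^∞ e^{-z/θ} z^{2H-1} dz = θ^{2H} Γ(2H)`. In the second term, bounding `e^{z/θ} ≤ e^{t/θ}` on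
`[0, t]` gives `e^{-2t/θ} ∫₀ᵗ e^{z/θ} z^{2H-1} dz ≤ t^{2H} e^{-t/θ} / (2H) → 0`. -/

open MeasureTheory Real Filter

/-- The variance function of the fOU process with deterministic initial value. -/
noncomputable def VarH (θ σ H t : ℝ) : ℝ :=
  (σ^2 / 2) *
    ((∫ z in (0:ℝ)..t, 2*H * Real.exp (-z/θ) * z ^ (2*H-1))
      + Real.exp (-2*t/θ) * (∫ z in (0:ℝ)..t, 2*H * Real.exp (z/θ) * z ^ (2*H-1)))

open Set Topology

section GammaIntegral

variable {θ s : ℝ}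

lemma integrableOn_exp_neg_div_mul_rpow (hθ : 0 < θ) (hs : 0 < s) :
    IntegrableOn (fun z : ℝ => exp (-z / θ) * z ^ (s - 1)) (Ioi 0) := by
  refine (integrableOn_rpow_mul_exp_neg_mul_rpow (s := s - 1) (by linarith) one_pos
    (inv_pos.2 hθ)).congr_fun (fun z _ => ?_) measurableSet_Ioi
  dsimp only
  rw [rpow_one, mul_comm, neg_mul, inv_mul_eq_div, neg_div]

lemma integral_Ioi_exp_neg_div_mul_rpow (hθ : 0 < θ) (hs : 0 < s) :
    ∫ z in Ioi 0, exp (-z / θ) * z ^ (s - 1) = θ ^ s * Gamma s := by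
  have h := integral_rpow_mul_exp_neg_mul_Ioi hs (inv_pos.2 hθ)
  rw [one_div, inv_inv] at h
  rw [← h]
  refine setIntegral_congr_fun measurableSet_Ioi (fun z _ => ?_)
  rw [mul_comm, inv_mul_eq_div, neg_div]

lemma tendsto_intervalIntegral_exp_neg_div_mul_rpow (hθ : 0 < θ) (hs : 0 < s) :
    Tendsto (fun t => ∫ z in (0 : ℝ)..t, exp (-z / θ) * z ^ (s - 1)) atTop
      (𝓝 (θ ^ s * Gamma s)) := by
  rw [← integral_Ioi_exp_neg_div_mul_rpow hθ hs]
  exact intervalIntegral_tendsto_integral_Ioi 0 (integrableOn_exp_neg_div_mul_rpow hθ hs)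
    tendsto_id

end GammaIntegral

section GrowingExponential

variable {θ s t : ℝ}

lemma intervalIntegral_exp_div_mul_rpow_nonneg (ht : 0 ≤ t) :
    0 ≤ ∫ z in (0 : ℝ)..t, exp (z / θ) * z ^ (s - 1) :=
  intervalIntegral.integral_nonneg ht fun _ hz => mul_nonneg (exp_pos _).le (rpow_nonneg hz.1 _)

lemma intervalIntegral_exp_div_mul_rpow_le (hθ : 0 < θ) (hs : 0 < s) (ht : 0 ≤ t) :
    ∫ z in (0 : ℝ)..t, exp (z / θ) * z ^ (s - 1) ≤ exp (t / θ) * (t ^ s / s) := by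
  have hs' : -1 < s - 1 := by linarith
  calc ∫ z in (0 : ℝ)..t, exp (z / θ) * z ^ (s - 1)
      ≤ ∫ z in (0 : ℝ)..t, exp (t / θ) * z ^ (s - 1) := by
        refine intervalIntegral.integral_mono_on ht
          ((intervalIntegral.intervalIntegrable_rpow' hs').continuousOn_mul (by fun_prop))
          ((intervalIntegral.intervalIntegrable_rpow' hs').const_mul _) fun z hz => ?_
        gcongr
        · exact rpow_nonneg hz.1 _
        · exact hz.2
    _ = exp (t / θ) * (t ^ s / s) := by
        rw [intervalIntegral.integral_const_mul, integral_rpow (Or.inl hs'), sub_add_cancel,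
          zero_rpow hs.ne', sub_zero]

lemma tendsto_exp_mul_intervalIntegral_exp_div_mul_rpow (hθ : 0 < θ) (hs : 0 < s) :
    Tendsto (fun t => exp (-2 * t / θ) * ∫ z in (0 : ℝ)..t, exp (z / θ) * z ^ (s - 1)) atTop
      (𝓝 0) := by
  have hbound : Tendsto (fun t : ℝ => s⁻¹ * (t ^ s * exp (-θ⁻¹ * t))) atTop (𝓝 0) := by
    simpa using (tendsto_rpow_mul_exp_neg_mul_atTop_nhds_zero s _ (inv_pos.2 hθ)).const_mul s⁻¹
  refine squeeze_zero' ?_ ?_ hbound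
  · filter_upwards [eventually_ge_atTop 0] with t ht
    exact mul_nonneg (exp_pos _).le (intervalIntegral_exp_div_mul_rpow_nonneg ht)
  · filter_upwards [eventually_ge_atTop 0] with t ht
    have hexp : exp (-2 * t / θ) * exp (t / θ) = exp (-θ⁻¹ * t) := by
      rw [← exp_add]
      congr 1
      field_simp
      ring
    calc exp (-2 * t / θ) * ∫ z in (0 : ℝ)..t, exp (z / θ) * z ^ (s - 1)
        ≤ exp (-2 * t / θ) * (exp (t / θ) * (t ^ s / s)) :=
          mul_le_mul_of_nonneg_left (intervalIntegral_exp_div_mul_rpow_le hθ hs ht) (exp_pos _).le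
      _ = s⁻¹ * (t ^ s * exp (-θ⁻¹ * t)) := by
          rw [← mul_assoc, hexp]
          ring

end GrowingExponential

lemma VarH_eq (θ σ H t : ℝ) :
    VarH θ σ H t = σ ^ 2 * H * ((∫ z in (0 : ℝ)..t, exp (-z / θ) * z ^ (2 * H - 1))
      + exp (-2 * t / θ) * ∫ z in (0 : ℝ)..t, exp (z / θ) * z ^ (2 * H - 1)) := by
  simp only [VarH, mul_assoc, intervalIntegral.integral_const_mul]
  ring

/-- `Var_H(t) → σ² θ^{2H} H Γ(2H)` as `t → +∞`. -/
theorem VarH_tendsto_atTop (θ σ H : ℝ) (hθ : 0 < θ) (hH : H ∈ Set.Ioo (0:ℝ) 1) :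
    Filter.Tendsto (fun t => VarH θ σ H t) Filter.atTop
      (nhds (σ^2 * θ ^ (2*H) * H * Real.Gamma (2*H))) := by
  have h2H : 0 < 2 * H := by linarith [hH.1]
  have hlim := ((tendsto_intervalIntegral_exp_neg_div_mul_rpow hθ h2H).add
    (tendsto_exp_mul_intervalIntegral_exp_div_mul_rpow hθ h2H)).const_mul (σ ^ 2 * H)
  simp only [VarH_eq]
  convert hlim using 2
  ring
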